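/- Let F be a propositional formula in 3-CNF with variables x_1,…,x_M and clauses C_1,…,C_L, each clause containing exactly three literals. Let the alphabet be Σ = {α_1,…,α_M} ∪ {β_1,…,β_L}. Construct the episode G as follows: it has nodes p_1,…,p_M with lab(p_i) = α_i, nodes n_1,…,n_M with lab(n_i) = α_i, and nodes c_1,…,c_{3L} with lab(c_{3j−2}) = lab(c_{3j−1}) = lab(c_{3j}) = β_j, each node carrying a single event; for each clause C_j and each k ∈ {1,2,3}, if the k-th literal of C_j involves variable x_i, add a proper edge from p_i to c_{3j+k−3} when the literal is positive and from n_i to c_{3j+k−3} when it is negative; G has no other edges. Let s be the sequence of 2M + 3L events with strictly increasing timestamps whose labels, in order, are α_1,…,α_M, β_1,…,β_L, α_1,…,α_M, β_1,…,β_L, β_1,…,β_L. Then s covers G if and only if F is satisfiable. -/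

import Mathlib

/-- A sequence event: a unique id, a label (from alphabet encoded as `ℕ`),
and an integer time stamp. -/
structure SeqEvent where
  id : ℕ
  lab : ℕ
  ts : ℤ
deriving DecidableEq

/-- An event sequence: a finite collection of sequence events with distinct ids,
whose time stamps are monotone in the ids. -/
structure EventSeq where
  events : Finset SeqEvent
  id_inj : ∀ e ∈ events, ∀ f ∈ events, e.id = f.id → e = f
  ts_mono : ∀ e ∈ events, ∀ f ∈ events, e.id ≤ f.id → e.ts ≤ f.ts

/-- An episode: a finite set of episode events (identified by ids in `ℕ`) with labels,
a finite set of graph nodes, a map from events to nodes (surjectivity and the DAG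
property are recorded in `Episode.WellFormed`), and weak and proper edges. -/
structure Episode where
  events : Finset ℕ
  lab : ℕ → ℕ
  nodes : Finset ℕ
  node : ℕ → ℕ
  weak : ℕ → ℕ → Prop
  proper : ℕ → ℕ → Prop

namespace Episode

/-- An edge of the episode graph (weak or proper). -/
def edge (G : Episode) (a b : ℕ) : Prop := G.weak a b ∨ G.proper a b

/-- `G.Desc m n` : `n` is a descendant of `m`, i.e. there is a directed path from `m` to `n`. -/
def Desc (G : Episode) (m n : ℕ) : Prop := Relation.TransGen G.edge m n

/-- `G.PDesc m n` : `n` is a proper descendant of `m`, i.e. some directed path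
from `m` to `n` contains a proper edge. -/
def PDesc (G : Episode) (m n : ℕ) : Prop :=
  ∃ a b, Relation.ReflTransGen G.edge m a ∧ G.proper a b ∧ Relation.ReflTransGen G.edge b n

/-- Well-formedness of an episode: events map into the nodes, every node carries an
event, edges run between nodes, the weak and proper edges are disjoint, and the
graph is acyclic (a DAG). -/
structure WellFormed (G : Episode) : Prop where
  node_mem : ∀ e ∈ G.events, G.node e ∈ G.nodes
  node_surj : ∀ n ∈ G.nodes, ∃ e ∈ G.events, G.node e = n
  weak_mem : ∀ a b, G.weak a b → a ∈ G.nodes ∧ b ∈ G.nodes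
  proper_mem : ∀ a b, G.proper a b → a ∈ G.nodes ∧ b ∈ G.nodes
  weak_proper_disjoint : ∀ a b, G.weak a b → G.proper a b → False
  acyclic : ∀ n, ¬ G.Desc n n

/-- The transitive closure of an episode: add an edge from every node to each of its
descendants, proper if the descendant is a proper descendant, weak otherwise. -/
def tcl (G : Episode) : Episode :=
  { G with
    proper := fun a b => G.PDesc a b
    weak := fun a b => G.Desc a b ∧ ¬ G.PDesc a b }

/-- An episode is transitively closed if it coincides with its transitive closure. -/
def TransClosed (G : Episode) : Prop :=
  (∀ a b, G.proper a b ↔ G.PDesc a b) ∧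
  (∀ a b, G.weak a b ↔ (G.Desc a b ∧ ¬ G.PDesc a b))

end Episode

/-- `m` is a coverage mapping of episode `G` into sequence `s`: an injective map from
the episode events into the sequence events preserving labels, mapping events of one
node to a common time stamp, and respecting weak and proper edges. -/
def IsCoverMap (s : EventSeq) (G : Episode) (m : ℕ → SeqEvent) : Prop :=
  (∀ e ∈ G.events, m e ∈ s.events) ∧
  Set.InjOn m ↑G.events ∧
  (∀ e ∈ G.events, (m e).lab = G.lab e) ∧
  (∀ e ∈ G.events, ∀ f ∈ G.events, G.node e = G.node f → (m e).ts = (m f).ts) ∧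
  (∀ e ∈ G.events, ∀ f ∈ G.events, G.Desc (G.node f) (G.node e) → (m f).ts ≤ (m e).ts) ∧
  (∀ e ∈ G.events, ∀ f ∈ G.events, G.PDesc (G.node f) (G.node e) → (m f).ts < (m e).ts)

/-- A sequence `s` covers an episode `G`. -/
def Covers (s : EventSeq) (G : Episode) : Prop := ∃ m, IsCoverMap s G m

/-- `G ⪯ H` : every sequence covering `H` also covers `G`. -/
def Subepisode (G H : Episode) : Prop := ∀ s : EventSeq, Covers s H → Covers s G

/-- `G ∼ H` : `G ⪯ H` and `H ⪯ G`. -/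
def EpisodeSimilar (G H : Episode) : Prop := Subepisode G H ∧ Subepisode H G

/-- The window `s[i, j]`: the subsequence of events with time stamps in `[i, j]`. -/
def EventSeq.window (s : EventSeq) (i j : ℤ) : EventSeq where
  events := s.events.filter (fun e => i ≤ e.ts ∧ e.ts ≤ j)
  id_inj := fun e he f hf h =>
    s.id_inj e (Finset.mem_filter.mp he).1 f (Finset.mem_filter.mp hf).1 h
  ts_mono := fun e he f hf h =>
    s.ts_mono e (Finset.mem_filter.mp he).1 f (Finset.mem_filter.mp hf).1 h

/-- The support `fr(G; s)` with window size `ρ`: the number of integers `t` such that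
the window `s[t, t + ρ - 1]` covers `G` (as an extended natural number). -/
noncomputable def support (ρ : ℤ) (s : EventSeq) (G : Episode) : ℕ∞ :=
  {t : ℤ | Covers (s.window t (t + ρ - 1)) G}.encard

/-- `first(i)` : the smallest time stamp in the range of the instance. -/
noncomputable def instFirst (G : Episode) (m : ℕ → SeqEvent) : ℤ :=
  sInf ((fun e => (m e).ts) '' ↑G.events)

/-- `last(i)` : the largest time stamp in the range of the instance. -/
noncomputable def instLast (G : Episode) (m : ℕ → SeqEvent) : ℤ :=
  sSup ((fun e => (m e).ts) '' ↑G.events)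

/-- `m` is an instance of `G` in `s` (with window size `ρ`): a coverage mapping of `G`
into `s` such that no used sequence event can be replaced by an unused one with the same
label, the same time stamp and a smaller id, and whose span is less than `ρ`. -/
def IsInstance (ρ : ℤ) (s : EventSeq) (G : Episode) (m : ℕ → SeqEvent) : Prop :=
  IsCoverMap s G m ∧
  (∀ e ∈ G.events, ∀ f ∈ s.events, (∀ e' ∈ G.events, m e' ≠ f) →
      f.lab = (m e).lab → f.ts = (m e).ts → ¬ f.id < (m e).id) ∧
  instLast G m - instFirst G m ≤ ρ - 1

/-- Labels: `α i = i` for the `M` variables, `β j = M + j` for the `L` clauses.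
The episode events/nodes are `p i = i`, `n i = M + i` (both labelled `α i`), and
`c t = 2M + t` for `t < 3L`, where `c (3j + k)` is labelled `β j`. -/
def satLab (M : ℕ) (e : ℕ) : ℕ :=
  if e < M then e else if e < 2 * M then e - M else M + (e - 2 * M) / 3

/-- The episode `G` built from a 3-CNF formula with `M` variables and `L` clauses.
`lit j k = (i, pos)` means that the `k`-th literal (`k < 3`) of the `j`-th clause
(`j < L`) involves variable `x i`, positively if `pos = true`. Each node carries a
single event; for each clause `j` and `k < 3` there is a proper edge from `p i`
(if the literal is positive) or from `n i` (if negative) to `c (3j + k)`; there are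
no other edges. -/
def satEpisode (M L : ℕ) (lit : ℕ → ℕ → ℕ × Bool) : Episode where
  events := Finset.range (2 * M + 3 * L)
  lab := satLab M
  nodes := Finset.range (2 * M + 3 * L)
  node := id
  weak := fun _ _ => False
  proper := fun a b => ∃ j < L, ∃ k < 3,
    b = 2 * M + 3 * j + k ∧
    a = (if (lit j k).2 then (lit j k).1 else M + (lit j k).1)

/-- The labels, in order, of the sequence
`α 0, …, α (M-1), β 0, …, β (L-1), α 0, …, α (M-1), β 0, …, β (L-1), β 0, …, β (L-1)`. -/
def satSeqLab (M L : ℕ) (t : ℕ) : ℕ :=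
  if t < M then t
  else if t < M + L then M + (t - M)
  else if t < 2 * M + L then t - (M + L)
  else if t < 2 * M + 2 * L then M + (t - (2 * M + L))
  else M + (t - (2 * M + 2 * L))

/-- The sequence `s` of `2M + 3L` events with strictly increasing time stamps whose
labels, in order, are `α_1 … α_M β_1 … β_L α_1 … α_M β_1 … β_L β_1 … β_L`. -/
def satSeq (M L : ℕ) : EventSeq where
  events := (Finset.range (2 * M + 3 * L)).image (fun t => ⟨t, satSeqLab M L t, (t : ℤ)⟩)
  id_inj := by
    intro e he f hf h
    simp only [Finset.mem_image] at he hf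
    obtain ⟨t, _, rfl⟩ := he
    obtain ⟨u, _, rfl⟩ := hf
    simp only [SeqEvent.mk.injEq] at h ⊢
    simp_all
  ts_mono := by
    intro e he f hf h
    simp only [Finset.mem_image] at he hf
    obtain ⟨t, _, rfl⟩ := he
    obtain ⟨u, _, rfl⟩ := hf
    simp only [] at h ⊢
    exact_mod_cast h

/-!
Every edge of the episode runs from a literal node `p i`, `n i` (below `2M`) to a clause node
(from `2M` on), so descendants are exactly the endpoints of single proper edges, and a cover is
an injective, label-preserving placement of the nodes on positions of `s` that puts every clause
node after its literal node.

The label `β j` occurs in `s` at positions `M + j`, `2M + L + j` and `2M + 2L + j`, so one of the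
three nodes of clause `j` sits at `M + j`. Its literal node then lies strictly before `M + j`,
which forces it onto the first copy of its `α i`; reading "`p i` occupies the first copy of `α i`"
as "`x i` is true" makes that literal true. Conversely, a satisfying assignment puts the true
literal nodes on the first copies of the `α`s and one clause node of a true literal of each clause
on the first copy of its `β`.
-/

namespace Episode

variable {G : Episode} {a b : ℕ}

theorem PDesc.desc (h : G.PDesc a b) : G.Desc a b := by
  obtain ⟨x, y, hax, hxy, hyb⟩ := h
  exact Relation.TransGen.trans_left
    (Relation.TransGen.tail' hax (Or.inr hxy)) hyb

theorem desc_iff_proper (hweak : ∀ a b, ¬ G.weak a b)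
    (hchain : ∀ a b c, G.proper a b → ¬ G.proper b c) : G.Desc a b ↔ G.proper a b := by
  have hedge : ∀ a b, G.edge a b ↔ G.proper a b := fun a b => or_iff_right (hweak a b)
  refine ⟨fun h => ?_, fun h => .single ((hedge a b).2 h)⟩
  induction h with
  | single h => exact (hedge _ _).1 h
  | tail _ h ih => exact absurd ((hedge _ _).1 h) (hchain _ _ _ ih)

end Episode

def litNode (M : ℕ) (l : ℕ × Bool) : ℕ := if l.2 then l.1 else M + l.1

def satEvent (M L t : ℕ) : SeqEvent := ⟨t, satSeqLab M L t, t⟩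

section SatReduction

variable {M L : ℕ} {lit : ℕ → ℕ → ℕ × Bool}

theorem satEvent_mem_satSeq {t : ℕ} :
    satEvent M L t ∈ (satSeq M L).events ↔ t < 2 * M + 3 * L := by
  simp [satSeq, satEvent]

theorem eq_satEvent_of_mem_satSeq {f : SeqEvent} (hf : f ∈ (satSeq M L).events) :
    f = satEvent M L f.id := by
  obtain ⟨t, -, rfl⟩ := Finset.mem_image.1 hf
  rfl

theorem satSeqLab_eq_alpha_iff {i t : ℕ} (hi : i < M) :
    satSeqLab M L t = i ↔ t = i ∨ t = M + L + i := by
  unfold satSeqLab; split_ifs <;> omega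

theorem satSeqLab_eq_beta_iff {j t : ℕ} (hj : j < L) :
    satSeqLab M L t = M + j ↔ t = M + j ∨ t = 2 * M + L + j ∨ t = 2 * M + 2 * L + j := by
  unfold satSeqLab; split_ifs <;> omega

theorem satLab_litNode {l : ℕ × Bool} (hl : l.1 < M) : satLab M (litNode M l) = l.1 := by
  unfold satLab litNode; split_ifs <;> omega

theorem satLab_clauseNode {j k : ℕ} (hk : k < 3) : satLab M (2 * M + 3 * j + k) = M + j := by
  unfold satLab; split_ifs <;> omega

theorem satNode_cases {e : ℕ} (he : e < 2 * M + 3 * L) :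
    (∃ l : ℕ × Bool, l.1 < M ∧ e = litNode M l) ∨
      ∃ j < L, ∃ k < 3, e = 2 * M + 3 * j + k := by
  by_cases h : e < 2 * M
  · by_cases hM : e < M
    · exact .inl ⟨(e, true), hM, rfl⟩
    · refine .inl ⟨(e - M, false), by dsimp only; omega, ?_⟩
      simp only [litNode, Bool.false_eq_true, if_false]
      omega
  · exact .inr ⟨(e - 2 * M) / 3, by omega, (e - 2 * M) % 3, by omega, by omega⟩

theorem satEpisode_proper_bounds (hvar : ∀ j < L, ∀ k < 3, (lit j k).1 < M) {a b : ℕ}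
    (h : (satEpisode M L lit).proper a b) : a < 2 * M ∧ 2 * M ≤ b ∧ b < 2 * M + 3 * L := by
  obtain ⟨j, hj, k, hk, rfl, rfl⟩ := h
  have := hvar j hj k hk
  split_ifs <;> omega

theorem satEpisode_desc_iff_proper (hvar : ∀ j < L, ∀ k < 3, (lit j k).1 < M) {a b : ℕ} :
    (satEpisode M L lit).Desc a b ↔ (satEpisode M L lit).proper a b :=
  Episode.desc_iff_proper (fun _ _ h => h) fun _ _ _ hab hbc => by
    have := (satEpisode_proper_bounds hvar hab).2.1
    have := (satEpisode_proper_bounds hvar hbc).1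
    omega

/-- A cover of `satEpisode M L lit` by `satSeq M L`, given by the map sending each node to the
position of its image. -/
structure IsSatPlacement (M L : ℕ) (lit : ℕ → ℕ → ℕ × Bool) (pos : ℕ → ℕ) : Prop where
  lt : ∀ e < 2 * M + 3 * L, pos e < 2 * M + 3 * L
  injOn : Set.InjOn pos (Set.Iio (2 * M + 3 * L))
  lab : ∀ e < 2 * M + 3 * L, satSeqLab M L (pos e) = satLab M e
  lt_of_proper : ∀ a b, (satEpisode M L lit).proper a b → pos a < pos b

theorem covers_satSeq_iff_exists_isSatPlacement (hvar : ∀ j < L, ∀ k < 3, (lit j k).1 < M) :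
    Covers (satSeq M L) (satEpisode M L lit) ↔ ∃ pos, IsSatPlacement M L lit pos := by
  have hev : ∀ e, e ∈ (satEpisode M L lit).events ↔ e < 2 * M + 3 * L := by
    simp [satEpisode]
  constructor
  · rintro ⟨m, hmem, hinj, hlab, -, -, hlt⟩
    have hm : ∀ e < 2 * M + 3 * L, m e = satEvent M L (m e).id := fun e he =>
      eq_satEvent_of_mem_satSeq (hmem e ((hev e).2 he))
    refine ⟨fun e => (m e).id, ⟨fun e he => ?_, fun a ha b hb h => ?_, fun e he => ?_, ?_⟩⟩
    · exact satEvent_mem_satSeq.1 (hm e he ▸ hmem e ((hev e).2 he))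
    · exact hinj ((hev a).2 ha) ((hev b).2 hb) (by rw [hm a ha, hm b hb]; exact congrArg _ h)
    · exact (congrArg SeqEvent.lab (hm e he)).symm.trans (hlab e ((hev e).2 he))
    · intro a b hab
      have ⟨ha, hb₁, hb₂⟩ := satEpisode_proper_bounds hvar hab
      have := hlt b ((hev b).2 hb₂) a ((hev a).2 (by omega)) ⟨a, b, .refl, hab, .refl⟩
      rw [hm a (by omega), hm b hb₂] at this
      have hid : ((m a).id : ℤ) < (m b).id := this
      exact_mod_cast hid
  · rintro ⟨pos, hpos⟩
    refine ⟨fun e => satEvent M L (pos e), fun e he => ?_, fun a ha b hb h => ?_,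
      fun e he => ?_, fun e _ f _ h => by rw [show e = f from h], fun e _ f _ h => ?_,
      fun e _ f _ h => ?_⟩
    · exact satEvent_mem_satSeq.2 (hpos.lt e ((hev e).1 he))
    · exact hpos.injOn ((hev a).1 ha) ((hev b).1 hb) (congrArg SeqEvent.id h)
    · exact hpos.lab e ((hev e).1 he)
    · show (pos f : ℤ) ≤ pos e
      exact_mod_cast (hpos.lt_of_proper _ _ ((satEpisode_desc_iff_proper hvar).1 h)).le
    · show (pos f : ℤ) < pos e
      exact_mod_cast hpos.lt_of_proper _ _ ((satEpisode_desc_iff_proper hvar).1 h.desc)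

namespace IsSatPlacement

variable {pos : ℕ → ℕ} (hpos : IsSatPlacement M L lit pos)
include hpos

theorem pos_litNode_eq {l : ℕ × Bool} (hl : l.1 < M) :
    pos (litNode M l) = l.1 ∨ pos (litNode M l) = M + L + l.1 := by
  have hlt : litNode M l < 2 * M + 3 * L := by unfold litNode; split_ifs <;> omega
  exact (satSeqLab_eq_alpha_iff hl).1 ((hpos.lab _ hlt).trans (satLab_litNode hl))

theorem exists_pos_clauseNode_eq {j : ℕ} (hj : j < L) :
    ∃ k < 3, pos (2 * M + 3 * j + k) = M + j := by
  by_contra! hnone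
  have hmaps : Set.MapsTo (fun k => pos (2 * M + 3 * j + k)) (Finset.range 3)
      ({2 * M + L + j, 2 * M + 2 * L + j} : Finset ℕ) := fun k hk => by
    have hk : k < 3 := by simpa using hk
    have := (satSeqLab_eq_beta_iff hj).1 ((hpos.lab _ (by omega)).trans (satLab_clauseNode hk))
    have := hnone k hk
    simp only [Finset.coe_insert, Finset.coe_singleton, Set.mem_insert_iff,
      Set.mem_singleton_iff]
    omega
  obtain ⟨k, hk, k', hk', hne, heq⟩ :=
    Finset.exists_ne_map_eq_of_card_lt_of_maps_to (Finset.card_le_two.trans_lt (by simp)) hmaps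
  simp only [Finset.mem_range] at hk hk'
  have := hpos.injOn (Set.mem_Iio.2 (by omega)) (Set.mem_Iio.2 (by omega)) heq
  exact hne (by omega)

theorem pos_litNode_eq_of_pos_clauseNode_eq (hvar : ∀ j < L, ∀ k < 3, (lit j k).1 < M)
    {j k : ℕ} (hj : j < L) (hk : k < 3) (h : pos (2 * M + 3 * j + k) = M + j) :
    pos (litNode M (lit j k)) = (lit j k).1 := by
  have := hpos.lt_of_proper _ _ ⟨j, hj, k, hk, rfl, rfl⟩
  have := hpos.pos_litNode_eq (hvar j hj k hk)
  simp only [litNode] at *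
  omega

theorem satisfiable (hvar : ∀ j < L, ∀ k < 3, (lit j k).1 < M) :
    ∃ τ : ℕ → Bool, ∀ j < L, ∃ k < 3, τ (lit j k).1 = (lit j k).2 := by
  refine ⟨fun i => decide (pos i = i), fun j hj => ?_⟩
  obtain ⟨k, hk, hjk⟩ := hpos.exists_pos_clauseNode_eq hj
  refine ⟨k, hk, ?_⟩
  have hsrc := hpos.pos_litNode_eq_of_pos_clauseNode_eq hvar hj hk hjk
  have hi := hvar j hj k hk
  generalize lit j k = l at hsrc hi ⊢
  obtain ⟨i, b⟩ := l
  dsimp only at hi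
  cases b
  · have hpn : pos i ≠ pos (M + i) := fun h => by
      have := hpos.injOn (Set.mem_Iio.2 (by omega)) (Set.mem_Iio.2 (by omega)) h; omega
    simp only [litNode, Bool.false_eq_true, if_false] at hsrc
    simpa using (show pos i ≠ i by omega)
  · simpa [litNode] using hsrc

end IsSatPlacement

/-- `kj j` indexes a literal of clause `j` that `τ` makes true. -/
def satPlacement (M L : ℕ) (τ : ℕ → Bool) (kj : ℕ → ℕ) (e : ℕ) : ℕ :=
  if e < M then (if τ e then e else M + L + e)
  else if e < 2 * M then (if τ (e - M) then M + L + (e - M) else e - M)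
  else if (e - 2 * M) % 3 = kj ((e - 2 * M) / 3) then M + (e - 2 * M) / 3
  else if (e - 2 * M) % 3 = (kj ((e - 2 * M) / 3) + 1) % 3 then 2 * M + L + (e - 2 * M) / 3
  else 2 * M + 2 * L + (e - 2 * M) / 3

variable {τ : ℕ → Bool} {kj : ℕ → ℕ}

theorem satPlacement_litNode {l : ℕ × Bool} (hl : l.1 < M) :
    satPlacement M L τ kj (litNode M l) = if τ l.1 = l.2 then l.1 else M + L + l.1 := by
  obtain ⟨i, b⟩ := l
  dsimp only at hl ⊢
  cases b
  · have h1 : ¬ M + i < M := by omega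
    have h2 : M + i < 2 * M := by omega
    simp only [litNode, satPlacement, Bool.false_eq_true, if_false, h1, h2, if_true,
      Nat.add_sub_cancel_left]
    cases τ i <;> simp
  · simp only [litNode, satPlacement, if_true, hl]

theorem satPlacement_clauseNode {j k : ℕ} (hk : k < 3) :
    satPlacement M L τ kj (2 * M + 3 * j + k) =
      if k = kj j then M + j else if k = (kj j + 1) % 3 then 2 * M + L + j
      else 2 * M + 2 * L + j := by
  have hj : (2 * M + 3 * j + k - 2 * M) / 3 = j := by omega
  have hk' : (2 * M + 3 * j + k - 2 * M) % 3 = k := by omega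
  unfold satPlacement
  rw [if_neg (by omega), if_neg (by omega), hj, hk']

theorem isSatPlacement_satPlacement (hvar : ∀ j < L, ∀ k < 3, (lit j k).1 < M)
    (hkj : ∀ j < L, kj j < 3) (hτ : ∀ j < L, τ (lit j (kj j)).1 = (lit j (kj j)).2) :
    IsSatPlacement M L lit (satPlacement M L τ kj) where
  lt e he := by unfold satPlacement; split_ifs <;> omega
  injOn a ha b hb h := by
    simp only [Set.mem_Iio] at ha hb
    rcases satNode_cases ha with ⟨⟨i, b⟩, hi, rfl⟩ | ⟨j, hj, k, hk, rfl⟩ <;>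
      rcases satNode_cases hb with ⟨⟨i', b'⟩, hi', rfl⟩ | ⟨j', hj', k', hk', rfl⟩
    · rw [satPlacement_litNode hi, satPlacement_litNode hi'] at h
      dsimp only at hi hi' h
      obtain rfl : i = i' := by split_ifs at h <;> omega
      obtain rfl : b = b' := by
        split_ifs at h with h1 h2 h2 <;>
          first | omega | (revert h1 h2; cases τ i <;> cases b <;> cases b' <;> decide)
      rfl
    · rw [satPlacement_litNode hi, satPlacement_clauseNode hk'] at h
      split_ifs at h <;> omega
    · rw [satPlacement_clauseNode hk, satPlacement_litNode hi'] at h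
      split_ifs at h <;> omega
    · rw [satPlacement_clauseNode hk, satPlacement_clauseNode hk'] at h
      have := hkj j hj
      obtain rfl : j = j' := by split_ifs at h <;> omega
      split_ifs at h <;> omega
  lab e he := by
    rcases satNode_cases he with ⟨l, hl, rfl⟩ | ⟨j, hj, k, hk, rfl⟩
    · rw [satPlacement_litNode hl, satLab_litNode hl, satSeqLab_eq_alpha_iff hl]
      split_ifs <;> simp
    · rw [satPlacement_clauseNode hk, satLab_clauseNode hk, satSeqLab_eq_beta_iff hj]
      split_ifs <;> simp
  lt_of_proper a b h := by
    obtain ⟨j, hj, k, hk, rfl, rfl⟩ := h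
    have hi := hvar j hj k hk
    change satPlacement M L τ kj (litNode M (lit j k)) < _
    rw [satPlacement_litNode hi, satPlacement_clauseNode hk]
    by_cases hkk : k = kj j
    · subst hkk
      simp only [hτ j hj, if_true]
      omega
    · split_ifs <;> omega

end SatReduction

/-- Theorem 1 of the paper, the reduction: for a 3-CNF formula `F` with
`M` variables and `L` clauses (each clause having exactly three literals, given by
`lit`), the sequence `satSeq M L` covers the episode `satEpisode M L lit` if and only
if `F` is satisfiable. -/
theorem satSeq_covers_iff_satisfiable (M L : ℕ) (lit : ℕ → ℕ → ℕ × Bool)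
    (hvar : ∀ j < L, ∀ k < 3, (lit j k).1 < M) :
    Covers (satSeq M L) (satEpisode M L lit) ↔
      ∃ τ : ℕ → Bool, ∀ j < L, ∃ k < 3, τ (lit j k).1 = (lit j k).2 := by
  rw [covers_satSeq_iff_exists_isSatPlacement hvar]
  constructor
  · rintro ⟨pos, hpos⟩
    exact hpos.satisfiable hvar
  · rintro ⟨τ, hτ⟩
    choose! kj hkj hτkj using hτ
    exact ⟨_, isSatPlacement_satPlacement hvar hkj hτkj⟩
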